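/- arXiv:1411.7630 — 2 statements merged into one kernel-verified Lean document; each statement's English description precedes it below -/
import Mathlib

section
/- Let λ ∈ {±1}ⁿ be any Golay sequence, Λ = diag(λ), F the n × n normalized DFT matrix, and C the n × n orthonormal Type-II DCT matrix. Then the coherence satisfies μ(F Λ C*) ≤ 2/√n, i.e., every entry of F Λ C* has absolute value at most 2/√n. -/
/-!
Entry `(j, k)` of `F Λ Cᴴ` is `(c_k / √n) ∑ₘ λₘ wᵐ cos (γ m + δ)` with `|w| = 1`. Writing the cosine
as the mean of two unimodular characters turns this sum into a unimodular combination of the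
values of `Λ(z) = ∑ₘ λₘ zᵐ` at two points of the unit circle, where `|Λ(z)|² ≤ 2n` by the
complementary-pair identity. Hence the entry is at most
`c_k · √(2n) / √n ≤ √(2/n) · √(2n) / √n = 2/√n`.
-/

open MeasureTheory ProbabilityTheory Matrix
open scoped BigOperators

noncomputable section

/-- Squared ℓ² norm of a complex vector. -/
def l2normSq {n : ℕ} (x : Fin n → ℂ) : ℝ := ∑ i, ‖x i‖ ^ 2

/-- `x` has at most `s` nonzero entries. -/
def SparseLe {n : ℕ} (s : ℕ) (x : Fin n → ℂ) : Prop :=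
  (Finset.univ.filter fun i => x i ≠ 0).card ≤ s

/-- The restricted isometry constant of order `s` of `A` is at most `δ`. -/
def RIPLe {m n : ℕ} (A : Matrix (Fin m) (Fin n) ℂ) (s : ℕ) (δ : ℝ) : Prop :=
  ∀ x : Fin n → ℂ, SparseLe s x →
    (1 - δ) * l2normSq x ≤ l2normSq (A.mulVec x) ∧
    l2normSq (A.mulVec x) ≤ (1 + δ) * l2normSq x

/-- The coherence of a matrix: the maximum absolute value of its entries. -/
def coherence {m n : ℕ} (A : Matrix (Fin m) (Fin n) ℂ) : ℝ :=
  ⨆ j : Fin m, ⨆ k : Fin n, ‖A j k‖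

/-- A unit-norm tight frame: `m ≤ n`, unit-norm columns, and `V Vᴴ = (n/m) I`. -/
def IsUTF {m n : ℕ} (V : Matrix (Fin m) (Fin n) ℂ) : Prop :=
  m ≤ n ∧ (∀ k, ∑ j, ‖V j k‖ ^ 2 = 1) ∧
    V * V.conjTranspose = ((n : ℂ) / (m : ℂ)) • 1

/-- A real random variable is `r`-subgaussian. -/
def IsSubgaussian {Ω : Type*} [MeasurableSpace Ω] (μ : Measure Ω) (r : ℝ) (X : Ω → ℝ) : Prop :=
  ∀ t : ℝ, ∫ ω, Real.exp (t * X ω) ∂μ ≤ Real.exp (r ^ 2 * t ^ 2 / 2)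

/-- A random vector with independent, zero-mean, unit-variance, `r`-subgaussian entries. -/
def IsSubgaussianVec {Ω : Type*} [MeasurableSpace Ω] (μ : Measure Ω) (r : ℝ) {n : ℕ}
    (ξ : Ω → Fin n → ℝ) : Prop :=
  iIndepFun (fun i ω => ξ ω i) μ ∧
  (∀ i, Measurable fun ω => ξ ω i) ∧
  (∀ i, ∫ ω, ξ ω i ∂μ = 0) ∧
  (∀ i, ∫ ω, (ξ ω i) ^ 2 ∂μ = 1) ∧
  (∀ i, IsSubgaussian μ r fun ω => ξ ω i)

/-- A Rademacher random vector: independent entries, uniform on `{1, -1}`. -/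
def IsRademacherVec {Ω : Type*} [MeasurableSpace Ω] (μ : Measure Ω) {n : ℕ}
    (ξ : Ω → Fin n → ℝ) : Prop :=
  iIndepFun (fun i ω => ξ ω i) μ ∧
  (∀ i, Measurable fun ω => ξ ω i) ∧
  (∀ i, μ {ω | ξ ω i = 1} = 1/2 ∧ μ {ω | ξ ω i = -1} = 1/2)

/-- The normalized `n × n` DFT matrix. -/
def DFT (n : ℕ) : Matrix (Fin n) (Fin n) ℂ :=
  fun j k => ((1 / Real.sqrt n : ℝ) : ℂ) *
    Complex.exp (-2 * Real.pi * Complex.I * ((j : ℕ) : ℂ) * ((k : ℕ) : ℂ) / (n : ℂ))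

/-- The failure probability `n ^ (−(log n)(log s)²)`. -/
def failProb (n s : ℕ) : ℝ := (n : ℝ) ^ (-(Real.log n) * (Real.log s) ^ 2)

/-- `a` is a Golay sequence: a `±1` sequence admitting a complementary `±1` sequence `b`
with `|A(z)|² + |B(z)|² = 2n` on the unit circle. -/
def IsGolay {n : ℕ} (a : Fin n → ℝ) : Prop :=
  (∀ k, a k = 1 ∨ a k = -1) ∧
  ∃ b : Fin n → ℝ, (∀ k, b k = 1 ∨ b k = -1) ∧
    ∀ z : ℂ, ‖z‖ = 1 →
      ‖∑ k, (a k : ℂ) * z ^ (k : ℕ)‖ ^ 2 +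
      ‖∑ k, (b k : ℂ) * z ^ (k : ℕ)‖ ^ 2 = 2 * n

/-- The matrix `P₁ = I_m ⊗ 1_qᵀ`. -/
def P1 (m q : ℕ) : Matrix (Fin m) (Fin (m * q)) ℂ :=
  fun j k => if (k : ℕ) / q = (j : ℕ) then 1 else 0

/-- The orthonormal Type-II DCT matrix. -/
def DCT (n : ℕ) : Matrix (Fin n) (Fin n) ℂ :=
  fun j k => (((if (j : ℕ) = 0 then Real.sqrt (1 / n) else Real.sqrt (2 / n)) *
    Real.cos (Real.pi * (j : ℕ) * (2 * (k : ℕ) + 1) / (2 * n)) : ℝ) : ℂ)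

theorem IsGolay.norm_sum_le {n : ℕ} {a : Fin n → ℝ} (ha : IsGolay a) {z : ℂ} (hz : ‖z‖ = 1) :
    ‖∑ k, (a k : ℂ) * z ^ (k : ℕ)‖ ≤ Real.sqrt (2 * n) := by
  obtain ⟨-, b, -, hab⟩ := ha
  refine Real.le_sqrt_of_sq_le ?_
  nlinarith [hab z hz, sq_nonneg ‖∑ k, (b k : ℂ) * z ^ (k : ℕ)‖]

theorem norm_sum_mul_cos_le {n : ℕ} (a : Fin n → ℂ) {B : ℝ}
    (hB : ∀ z : ℂ, ‖z‖ = 1 → ‖∑ k, a k * z ^ (k : ℕ)‖ ≤ B)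
    {w : ℂ} (hw : ‖w‖ = 1) (γ δ : ℝ) :
    ‖∑ k, a k * w ^ (k : ℕ) * (Real.cos (γ * (k : ℕ) + δ) : ℂ)‖ ≤ B := by
  set e : ℝ → ℂ := fun θ => Complex.exp (θ * Complex.I) with he
  have hsplit : ∑ k, a k * w ^ (k : ℕ) * (Real.cos (γ * (k : ℕ) + δ) : ℂ) =
      (e δ * ∑ k, a k * (w * e γ) ^ (k : ℕ) + e (-δ) * ∑ k, a k * (w * e (-γ)) ^ (k : ℕ)) / 2 := by
    simp only [Finset.mul_sum, ← Finset.sum_add_distrib, Finset.sum_div]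
    refine Finset.sum_congr rfl fun k _ => ?_
    have hpos : Complex.exp ((γ * (k : ℕ) + δ : ℝ) * Complex.I) = e δ * e γ ^ (k : ℕ) := by
      simp only [he, ← Complex.exp_nat_mul, ← Complex.exp_add]
      push_cast
      ring_nf
    have hneg : Complex.exp (-(γ * (k : ℕ) + δ : ℝ) * Complex.I) = e (-δ) * e (-γ) ^ (k : ℕ) := by
      simp only [he, ← Complex.exp_nat_mul, ← Complex.exp_add]
      push_cast
      ring_nf
    rw [Complex.ofReal_cos, Complex.cos, hpos, hneg]
    ring
  have he_norm : ∀ θ, ‖e θ‖ = 1 := Complex.norm_exp_ofReal_mul_I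
  have hB' : ∀ θ, ‖∑ k, a k * (w * e θ) ^ (k : ℕ)‖ ≤ B := fun θ =>
    hB _ (by rw [norm_mul, hw, he_norm, one_mul])
  rw [hsplit, norm_div, Complex.norm_two, div_le_iff₀ two_pos]
  calc _ ≤ ‖e δ‖ * ‖∑ k, a k * (w * e γ) ^ (k : ℕ)‖ +
        ‖e (-δ)‖ * ‖∑ k, a k * (w * e (-γ)) ^ (k : ℕ)‖ :=
        (norm_add_le _ _).trans_eq (by rw [norm_mul, norm_mul])
    _ ≤ B * 2 := by
      rw [he_norm, he_norm]
      linarith [hB' γ, hB' (-γ)]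

theorem DFT_mul_diagonal_mul_DCT_conjTranspose_apply {n : ℕ} (a : Fin n → ℂ) (j k : Fin n) :
    (DFT n * Matrix.diagonal a * (DCT n).conjTranspose) j k =
      (((if (k : ℕ) = 0 then Real.sqrt (1 / n) else Real.sqrt (2 / n)) / Real.sqrt n : ℝ) : ℂ) *
        ∑ m, a m * Complex.exp (-2 * Real.pi * Complex.I * (j : ℕ) / n) ^ (m : ℕ) *
          (Real.cos (Real.pi * (k : ℕ) / n * (m : ℕ) + Real.pi * (k : ℕ) / (2 * n)) : ℂ) := by
  rw [Matrix.mul_apply, Finset.mul_sum]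
  refine Finset.sum_congr rfl fun m _ => ?_
  rw [show Real.pi * (k : ℕ) / n * (m : ℕ) + Real.pi * (k : ℕ) / (2 * n) =
      Real.pi * (k : ℕ) * (2 * (m : ℕ) + 1) / (2 * n) by ring]
  simp only [Matrix.mul_diagonal, Matrix.conjTranspose_apply, DCT, DFT, Complex.star_def,
    Complex.conj_ofReal, ← Complex.exp_nat_mul]
  push_cast
  ring_nf

theorem golay_coherence_dct_general (n : ℕ) (lam : Fin n → ℝ) (hlam : IsGolay lam) :
    ∀ (j k : Fin n),
      ‖(DFT n * Matrix.diagonal (fun i => ((lam i : ℝ) : ℂ)) *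
        (DCT n).conjTranspose) j k‖ ≤ 2 / Real.sqrt n := by
  intro j k
  have hn : (0 : ℝ) < n := by exact_mod_cast j.pos
  set c : ℝ := if (k : ℕ) = 0 then Real.sqrt (1 / n) else Real.sqrt (2 / n)
  have hc : c ≤ Real.sqrt (2 / n) := by
    dsimp only [c]
    split_ifs
    exacts [Real.sqrt_le_sqrt (by gcongr; norm_num), le_rfl]
  have hw : ‖Complex.exp (-2 * Real.pi * Complex.I * (j : ℕ) / n)‖ = 1 := by
    rw [Complex.norm_exp]
    simp
  have hsum := norm_sum_mul_cos_le _ (fun z hz => hlam.norm_sum_le hz) hw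
    (Real.pi * (k : ℕ) / n) (Real.pi * (k : ℕ) / (2 * n))
  have hsqrt : Real.sqrt (2 / n) * Real.sqrt (2 * n) = 2 := by
    rw [← Real.sqrt_mul (by positivity), show 2 / (n : ℝ) * (2 * n) = 2 * 2 by field_simp,
      Real.sqrt_mul_self zero_le_two]
  rw [DFT_mul_diagonal_mul_DCT_conjTranspose_apply, norm_mul, Complex.norm_real,
    Real.norm_of_nonneg (by positivity)]
  calc c / Real.sqrt n * _ ≤ Real.sqrt (2 / n) / Real.sqrt n * Real.sqrt (2 * n) := by gcongr
    _ = 2 / Real.sqrt n := by rw [div_mul_eq_mul_div, hsqrt]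

/-- coherence bound `μ(F Λ C*) ≤ 2/√n` for a Golay modulation `Λ` and the
Type-II DCT matrix `C`. -/
theorem golay_coherence_dct (n : ℕ) (hn : 0 < n) (lam : Fin n → ℝ) (hlam : IsGolay lam) :
    ∀ (j k : Fin n),
      ‖(DFT n * Matrix.diagonal (fun i => ((lam i : ℝ) : ℂ)) *
        (DCT n).conjTranspose) j k‖ ≤ 2 / Real.sqrt n :=
  golay_coherence_dct_general n lam hlam

end
end

section
/- Let λ ∈ {±1}^{2^d} be the Rudin–Shapiro Golay sequence of length 2^d, and for 1 ≤ l ≤ d−1 partition λ into 2^l consecutive segments λ₀,…,λ_{2^l−1}, each of length 2^{d−l}. Then each segment λ_i is itself a Golay sequence, and moreover λ_i ⊙ γ_{2^{d−l}} is a Golay sequence, where γ_{2q} ∈ {±1}^{2q} is the vector whose first q entries equal +1 and last q entries equal −1, and ⊙ denotes entrywise multiplication. -/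
open MeasureTheory ProbabilityTheory Matrix
open scoped BigOperators

noncomputable section

/-- The Rudin–Shapiro iterative process: `(rsPQ d).1` and `(rsPQ d).2` are the complementary
pair `(P_d, Q_d)` of `±1` sequences of length `2^d` (indexed by `ℕ`, junk values beyond). -/
def rsPQ : ℕ → (ℕ → ℤ) × (ℕ → ℤ)
  | 0 => (fun _ => 1, fun _ => 1)
  | d + 1 =>
      ((fun k => if k < 2 ^ d then (rsPQ d).1 k else (rsPQ d).2 (k - 2 ^ d)),
       (fun k => if k < 2 ^ d then (rsPQ d).1 k else -((rsPQ d).2 (k - 2 ^ d))))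

/-- The Rudin–Shapiro (Golay) sequence of length `2^d`. -/
def rudinShapiro (d : ℕ) : ℕ → ℤ := (rsPQ d).1

/-!
Since `P_{n+1} = (P_n, Q_n)` and `Q_{n+1} = (P_n, -Q_n)`, induction on `n - m` shows that every
aligned block of length `2^m` of `P_n` or `Q_n` is one of `±P_m`, `±Q_m`. These are Golay:
`(P_m, Q_m)` is a complementary pair, because on `|z| = 1` the parallelogram law gives
`|P_{m+1}(z)|² + |Q_{m+1}(z)|² = 2 (|P_m(z)|² + |Q_m(z)|²)`. Finally, multiplying by `γ` flips the
sign of the second half, which interchanges `P_{m+1}` and `Q_{m+1}`.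
-/

lemma rsPQ_succ_fst_of_lt {d k : ℕ} (hk : k < 2 ^ d) : (rsPQ (d + 1)).1 k = (rsPQ d).1 k := by
  simp [rsPQ, hk]

lemma rsPQ_succ_snd_of_lt {d k : ℕ} (hk : k < 2 ^ d) : (rsPQ (d + 1)).2 k = (rsPQ d).1 k := by
  simp [rsPQ, hk]

lemma rsPQ_succ_fst_two_pow_add (d k : ℕ) : (rsPQ (d + 1)).1 (2 ^ d + k) = (rsPQ d).2 k := by
  simp [rsPQ]

lemma rsPQ_succ_snd_two_pow_add (d k : ℕ) :
    (rsPQ (d + 1)).2 (2 ^ d + k) = -(rsPQ d).2 k := by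
  simp [rsPQ]

lemma rsPQ_succ_fst_mul_gamma (d k : ℕ) :
    (rsPQ (d + 1)).1 k * (if k < 2 ^ d then 1 else -1) = (rsPQ (d + 1)).2 k := by
  by_cases hk : k < 2 ^ d <;> simp [rsPQ, hk]

lemma rsPQ_succ_snd_mul_gamma (d k : ℕ) :
    (rsPQ (d + 1)).2 k * (if k < 2 ^ d then 1 else -1) = (rsPQ (d + 1)).1 k := by
  by_cases hk : k < 2 ^ d <;> simp [rsPQ, hk]

lemma neg_eq_one_or_eq_neg_one {R : Type*} [InvolutiveNeg R] [One R] {x : R}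
    (h : x = 1 ∨ x = -1) : -x = 1 ∨ -x = -1 := by
  rcases h with rfl | rfl
  · exact .inr rfl
  · exact .inl (neg_neg 1)

lemma rsPQ_eq_one_or_neg_one (d k : ℕ) :
    ((rsPQ d).1 k = 1 ∨ (rsPQ d).1 k = -1) ∧ ((rsPQ d).2 k = 1 ∨ (rsPQ d).2 k = -1) := by
  induction d generalizing k with
  | zero => simp [rsPQ]
  | succ d ih =>
    by_cases hk : k < 2 ^ d
    · simp only [rsPQ_succ_fst_of_lt hk, rsPQ_succ_snd_of_lt hk, and_self, (ih k).1]
    · obtain ⟨j, rfl⟩ := Nat.exists_eq_add_of_le (not_lt.1 hk)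
      rw [rsPQ_succ_fst_two_pow_add, rsPQ_succ_snd_two_pow_add]
      exact ⟨(ih j).2, neg_eq_one_or_eq_neg_one (ih j).2⟩

lemma sum_rsPQ_succ_fst (d : ℕ) (z : ℂ) :
    ∑ k ∈ Finset.range (2 ^ (d + 1)), ((rsPQ (d + 1)).1 k : ℂ) * z ^ k =
      ∑ k ∈ Finset.range (2 ^ d), ((rsPQ d).1 k : ℂ) * z ^ k +
        z ^ 2 ^ d * ∑ k ∈ Finset.range (2 ^ d), ((rsPQ d).2 k : ℂ) * z ^ k := by
  rw [Nat.two_pow_succ, Finset.sum_range_add, Finset.mul_sum]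
  congr 1
  · refine Finset.sum_congr rfl fun k hk => ?_
    rw [rsPQ_succ_fst_of_lt (Finset.mem_range.1 hk)]
  · refine Finset.sum_congr rfl fun k _ => ?_
    rw [rsPQ_succ_fst_two_pow_add, pow_add]
    ring

lemma sum_rsPQ_succ_snd (d : ℕ) (z : ℂ) :
    ∑ k ∈ Finset.range (2 ^ (d + 1)), ((rsPQ (d + 1)).2 k : ℂ) * z ^ k =
      ∑ k ∈ Finset.range (2 ^ d), ((rsPQ d).1 k : ℂ) * z ^ k -
        z ^ 2 ^ d * ∑ k ∈ Finset.range (2 ^ d), ((rsPQ d).2 k : ℂ) * z ^ k := by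
  rw [Nat.two_pow_succ, Finset.sum_range_add, Finset.mul_sum, sub_eq_add_neg,
    ← Finset.sum_neg_distrib]
  congr 1
  · refine Finset.sum_congr rfl fun k hk => ?_
    rw [rsPQ_succ_snd_of_lt (Finset.mem_range.1 hk)]
  · refine Finset.sum_congr rfl fun k _ => ?_
    rw [rsPQ_succ_snd_two_pow_add, pow_add]
    push_cast
    ring

lemma norm_sum_rsPQ_fst_sq_add_snd_sq (d : ℕ) {z : ℂ} (hz : ‖z‖ = 1) :
    ‖∑ k ∈ Finset.range (2 ^ d), ((rsPQ d).1 k : ℂ) * z ^ k‖ ^ 2 +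
      ‖∑ k ∈ Finset.range (2 ^ d), ((rsPQ d).2 k : ℂ) * z ^ k‖ ^ 2 = 2 ^ (d + 1) := by
  induction d with
  | zero => norm_num [rsPQ]
  | succ d ih =>
    rw [sum_rsPQ_succ_fst, sum_rsPQ_succ_snd, parallelogram_law_with_norm ℝ, norm_mul,
      norm_pow, hz, one_pow, one_mul, ih, pow_succ 2 (d + 1), mul_comm]

def IsGolayPair {n : ℕ} (a b : Fin n → ℝ) : Prop :=
  (∀ k, a k = 1 ∨ a k = -1) ∧ (∀ k, b k = 1 ∨ b k = -1) ∧
    ∀ z : ℂ, ‖z‖ = 1 →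
      ‖∑ k, (a k : ℂ) * z ^ (k : ℕ)‖ ^ 2 + ‖∑ k, (b k : ℂ) * z ^ (k : ℕ)‖ ^ 2 = 2 * n

namespace IsGolayPair

variable {n : ℕ} {a b : Fin n → ℝ}

lemma isGolay (h : IsGolayPair a b) : IsGolay a :=
  ⟨h.1, b, h.2.1, h.2.2⟩

lemma symm (h : IsGolayPair a b) : IsGolayPair b a :=
  ⟨h.2.1, h.1, fun z hz => by rw [add_comm]; exact h.2.2 z hz⟩

lemma neg (h : IsGolayPair a b) : IsGolayPair (-a) (-b) := by
  refine ⟨fun k => neg_eq_one_or_eq_neg_one (h.1 k), fun k => neg_eq_one_or_eq_neg_one (h.2.1 k),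
    fun z hz => ?_⟩
  simp only [Pi.neg_apply, Complex.ofReal_neg, neg_mul, Finset.sum_neg_distrib, norm_neg]
  exact h.2.2 z hz

lemma smul {ε : ℝ} (hε : ε = 1 ∨ ε = -1) (h : IsGolayPair a b) : IsGolayPair (ε • a) (ε • b) := by
  rcases hε with rfl | rfl
  · simpa only [one_smul]
  · simpa only [neg_smul, one_smul] using h.neg

end IsGolayPair

lemma isGolayPair_rsPQ (d : ℕ) :
    IsGolayPair (fun k : Fin (2 ^ d) => ((rsPQ d).1 k : ℝ)) (fun k => ((rsPQ d).2 k : ℝ)) := by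
  refine ⟨fun k => ?_, fun k => ?_, fun z hz => ?_⟩
  · rcases (rsPQ_eq_one_or_neg_one d k).1 with h | h <;> simp [h]
  · rcases (rsPQ_eq_one_or_neg_one d k).2 with h | h <;> simp [h]
  · simp only [Complex.ofReal_intCast]
    rw [Fin.sum_univ_eq_sum_range (fun k => ((rsPQ d).1 k : ℂ) * z ^ k),
      Fin.sum_univ_eq_sum_range (fun k => ((rsPQ d).2 k : ℂ) * z ^ k),
      norm_sum_rsPQ_fst_sq_add_snd_sq d hz]
    push_cast
    ring

def IsSignedRS (m : ℕ) (f : ℕ → ℝ) : Prop :=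
  ∃ ε : ℝ, (ε = 1 ∨ ε = -1) ∧
    ((∀ k < 2 ^ m, f k = ε * (rsPQ m).1 k) ∨ (∀ k < 2 ^ m, f k = ε * (rsPQ m).2 k))

namespace IsSignedRS

variable {m : ℕ} {f g : ℕ → ℝ}

lemma congr (h : IsSignedRS m g) (hfg : ∀ k < 2 ^ m, f k = g k) : IsSignedRS m f := by
  obtain ⟨ε, hε, hg | hg⟩ := h
  · exact ⟨ε, hε, .inl fun k hk => (hfg k hk).trans (hg k hk)⟩
  · exact ⟨ε, hε, .inr fun k hk => (hfg k hk).trans (hg k hk)⟩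

lemma neg (h : IsSignedRS m f) : IsSignedRS m (fun k => -f k) := by
  obtain ⟨ε, hε, hf | hf⟩ := h
  · exact ⟨-ε, neg_eq_one_or_eq_neg_one hε, .inl fun k hk => by dsimp only; rw [hf k hk, neg_mul]⟩
  · exact ⟨-ε, neg_eq_one_or_eq_neg_one hε, .inr fun k hk => by dsimp only; rw [hf k hk, neg_mul]⟩

lemma mul_gamma (h : IsSignedRS m f) :
    IsSignedRS m (fun k => f k * if k < 2 ^ (m - 1) then 1 else -1) := by
  cases m with
  | zero => exact h.congr fun k hk => by simp_all
  | succ m =>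
    obtain ⟨ε, hε, hf | hf⟩ := h
    · refine ⟨ε, hε, .inr fun k hk => ?_⟩
      dsimp only
      rw [hf k hk, Nat.add_sub_cancel, ← rsPQ_succ_fst_mul_gamma m k]
      push_cast
      ring
    · refine ⟨ε, hε, .inl fun k hk => ?_⟩
      dsimp only
      rw [hf k hk, Nat.add_sub_cancel, ← rsPQ_succ_snd_mul_gamma m k]
      push_cast
      ring

lemma isGolay (h : IsSignedRS m f) : IsGolay (fun k : Fin (2 ^ m) => f k) := by
  obtain ⟨ε, hε, hf | hf⟩ := h
  · have hfε : (fun k : Fin (2 ^ m) => f k) = ε • fun k : Fin (2 ^ m) => ((rsPQ m).1 k : ℝ) :=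
      funext fun k => hf k k.isLt
    exact hfε ▸ ((isGolayPair_rsPQ m).smul hε).isGolay
  · have hfε : (fun k : Fin (2 ^ m) => f k) = ε • fun k : Fin (2 ^ m) => ((rsPQ m).2 k : ℝ) :=
      funext fun k => hf k k.isLt
    exact hfε ▸ ((isGolayPair_rsPQ m).symm.smul hε).isGolay

end IsSignedRS

lemma isSignedRS_rsPQ_segment (l m : ℕ) {i : ℕ} (hi : i < 2 ^ l) :
    IsSignedRS m (fun k => ((rsPQ (l + m)).1 (i * 2 ^ m + k) : ℝ)) ∧
      IsSignedRS m (fun k => ((rsPQ (l + m)).2 (i * 2 ^ m + k) : ℝ)) := by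
  induction l generalizing i with
  | zero =>
    obtain rfl : i = 0 := by simpa using hi
    simp only [zero_mul, zero_add]
    exact ⟨⟨1, .inl rfl, .inl fun k _ => by simp⟩, ⟨1, .inl rfl, .inr fun k _ => by simp⟩⟩
  | succ l ih =>
    rw [Nat.add_right_comm]
    rcases lt_or_ge i (2 ^ l) with hil | hil
    · have hlt : ∀ k < 2 ^ m, i * 2 ^ m + k < 2 ^ (l + m) := fun k hk =>
        calc i * 2 ^ m + k < (i + 1) * 2 ^ m := by rw [add_one_mul]; omega
          _ ≤ 2 ^ l * 2 ^ m := Nat.mul_le_mul_right _ hil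
          _ = 2 ^ (l + m) := (pow_add 2 l m).symm
      exact ⟨(ih hil).1.congr fun k hk => by rw [rsPQ_succ_fst_of_lt (hlt k hk)],
        (ih hil).1.congr fun k hk => by rw [rsPQ_succ_snd_of_lt (hlt k hk)]⟩
    · obtain ⟨j, rfl⟩ := Nat.exists_eq_add_of_le hil
      have hj : j < 2 ^ l := by rw [pow_succ] at hi; omega
      have hidx : ∀ k, (2 ^ l + j) * 2 ^ m + k = 2 ^ (l + m) + (j * 2 ^ m + k) := fun k => by
        rw [pow_add]; ring
      exact ⟨(ih hj).2.congr fun k _ => by rw [hidx, rsPQ_succ_fst_two_pow_add],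
        (ih hj).2.neg.congr fun k _ => by rw [hidx, rsPQ_succ_snd_two_pow_add]; push_cast; rfl⟩

theorem rudin_shapiro_segments_golay_general (d l : ℕ) (hl2 : l ≤ d - 1)
    (i : ℕ) (hi : i < 2 ^ l) :
    IsGolay (fun k : Fin (2 ^ (d - l)) =>
      ((rudinShapiro d (i * 2 ^ (d - l) + (k : ℕ)) : ℤ) : ℝ)) ∧
    IsGolay (fun k : Fin (2 ^ (d - l)) =>
      ((rudinShapiro d (i * 2 ^ (d - l) + (k : ℕ)) : ℤ) : ℝ) *
        (if (k : ℕ) < 2 ^ (d - l - 1) then 1 else -1)) := by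
  obtain ⟨m, rfl⟩ : ∃ m, d = l + m := ⟨d - l, by omega⟩
  have hseg := (isSignedRS_rsPQ_segment l m hi).1
  rw [Nat.add_sub_cancel_left]
  exact ⟨hseg.isGolay, hseg.mul_gamma.isGolay⟩

/-- each length-`2^{d−l}` segment of the Rudin–Shapiro sequence of length
`2^d` is a Golay sequence, and so is its entrywise product with `γ = (1,…,1,−1,…,−1)`. -/
theorem rudin_shapiro_segments_golay (d l : ℕ) (hl1 : 1 ≤ l) (hl2 : l ≤ d - 1)
    (i : ℕ) (hi : i < 2 ^ l) :
    IsGolay (fun k : Fin (2 ^ (d - l)) =>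
      ((rudinShapiro d (i * 2 ^ (d - l) + (k : ℕ)) : ℤ) : ℝ)) ∧
    IsGolay (fun k : Fin (2 ^ (d - l)) =>
      ((rudinShapiro d (i * 2 ^ (d - l) + (k : ℕ)) : ℤ) : ℝ) *
        (if (k : ℕ) < 2 ^ (d - l - 1) then 1 else -1)) :=
  rudin_shapiro_segments_golay_general d l hl2 i hi
end
end
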